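/- arXiv:1002.0519 — 2 statements merged into one kernel-verified Lean document; each statement's English description precedes it below -/
import Mathlib

section
/- Let x = p/q ∈ ℂ, where p, q ∈ ℤ[i] are coprime in ℤ[i] and q ≠ 0. Let z ∈ ℤ[i] with z and conj(z) coprime in ℤ[i], and let ε ∈ {1, −1, i, −i}. Then the rotation w ↦ ε·(z/conj(z))·w belongs to SOC(x+Γ) if and only if q divides εz − conj(z) in ℤ[i]. Consequently, SOC(x+Γ) = SOC(1/q + Γ). -/
open Pointwise Complex ComplexConjugate

/-- The square lattice `Γ = ℤ[i]`, i.e. the Gaussian integers viewed as an additive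
subgroup of `ℂ`. -/
noncomputable def Zi : AddSubgroup ℂ :=
  AddMonoidHom.range (GaussianInt.toComplex.toAddMonoidHom)

/-- `f` is (the underlying map of) a surjective real-linear isometry of `ℂ`. -/
def IsLinIso (f : ℂ → ℂ) : Prop := ∃ R : ℂ ≃ₗᵢ[ℝ] ℂ, ⇑R = f

/-- `f` is a rotation of `ℂ`, i.e. multiplication by a complex number of modulus 1. -/
def IsRotation (f : ℂ → ℂ) : Prop := ∃ u : ℂ, ‖u‖ = 1 ∧ ∀ w, f w = u * w

/-- `f` is a reflection of `ℂ`, i.e. `w ↦ u * conj w` for a complex number `u` of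
modulus 1. -/
def IsReflection (f : ℂ → ℂ) : Prop := ∃ u : ℂ, ‖u‖ = 1 ∧ ∀ w, f w = u * conj w

/-- The shifted square lattice `x + Γ` as a subset of `ℂ`. -/
noncomputable def shiftedZi (x : ℂ) : Set ℂ := x +ᵥ (Zi : Set ℂ)

/-- `OC (x+Γ)`: the set of (maps of) surjective real-linear isometries `f` of `ℂ` such
that `(x+Γ) ∩ f(x+Γ)` is a coset `c + Λ`, with `c ∈ x+Γ` and `Λ` a finite-index
additive subgroup of `Γ = ℤ[i]`. -/
noncomputable def OCs (x : ℂ) : Set (ℂ → ℂ) :=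
  {f | IsLinIso f ∧ ∃ c ∈ shiftedZi x, ∃ Λ : AddSubgroup ℂ, Λ ≤ Zi ∧
    Λ.relIndex Zi ≠ 0 ∧ shiftedZi x ∩ (f '' shiftedZi x) = c +ᵥ (Λ : Set ℂ)}

/-- `SOC (x+Γ)`: the rotations among the coincidence isometries of `x + Γ`. -/
noncomputable def SOCs (x : ℂ) : Set (ℂ → ℂ) := {f ∈ OCs x | IsRotation f}

/-!
Write `x = p/q` and `u = εz/z̄`. Clearing denominators, `x + a = u (x + b)` with `a, b ∈ ℤ[i]`
becomes `z̄ (p + q a) = ε z (p + q b)`, i.e. `p (εz - z̄) = q (z̄ a - ε z b)`. As `p` and `q` are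
coprime, a solution forces `q ∣ εz - z̄`. Conversely, if `εz - z̄ = q k` the equation reads
`z̄ a - ε z b = p k`; as `z` and `z̄` are coprime, its solutions `a` form one coset `a₀ + εz ℤ[i]`,
so `(x + Γ) ∩ u (x + Γ) = x + a₀ + εz Γ`, a coset of a sublattice of finite index.

A coincidence rotation `u` maps a nonzero difference of two points of `x + Γ` into `Γ`, so `u` is a
quotient `a / b` of Gaussian integers with `N a = N b`. In lowest terms this gives `b ∣ ā ∣ b`, so
`u = ε a / ā`. The criterion above depends on `q` alone, whence `SOC (x + Γ) = SOC (1/q + Γ)`.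
-/

open GaussianInt

local notation "ℤ[i]" => GaussianInt

section Bezout

variable {R : Type*} [CommRing R]

theorem dvd_sub_of_mul_add_eq_mul_add {p q w y a b : R} (hpq : IsCoprime p q)
    (h : w * (p + q * a) = y * (p + q * b)) : q ∣ y - w :=
  hpq.symm.dvd_of_dvd_mul_left ⟨w * a - y * b, by linear_combination -h⟩

theorem mul_add_eq_mul_add_iff [IsDomain R] {p q w y k a b : R} (hq : q ≠ 0)
    (hk : q * k = y - w) :
    w * (p + q * a) = y * (p + q * b) ↔ w * a - y * b = p * k := by
  rw [← sub_eq_zero, ← sub_eq_zero (a := w * a - y * b),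
    show w * (p + q * a) - y * (p + q * b) = q * (w * a - y * b - p * k) by
      linear_combination p * hk, mul_eq_zero, or_iff_right hq]

theorem exists_mul_sub_mul_eq_iff_dvd_sub {w y A B c a : R} (hAB : A * y + B * w = 1) :
    (∃ b, w * a - y * b = c) ↔ y ∣ a - B * c := by
  constructor
  · rintro ⟨b, rfl⟩
    exact ⟨A * a + B * b, by linear_combination -a * hAB⟩
  · rintro ⟨t, ht⟩
    exact ⟨w * t - A * c, by linear_combination w * ht + c * hAB⟩

end Bezout

namespace GaussianInt

def equivIntProd : ℤ[i] ≃ₗ[ℤ] ℤ × ℤ :=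
  AddEquiv.toIntLinearEquiv
    { toFun := fun a => (a.re, a.im)
      invFun := fun c => ⟨c.1, c.2⟩
      map_add' := fun _ _ => rfl }

instance : Module.Free ℤ ℤ[i] := .of_equiv equivIntProd.symm

instance : Module.Finite ℤ ℤ[i] := .equiv equivIntProd.symm

end GaussianInt

noncomputable def principalSublattice (y : ℤ[i]) : AddSubgroup ℂ :=
  (Ideal.span {y}).toAddSubgroup.map toComplex.toAddMonoidHom

theorem mem_principalSublattice {y : ℤ[i]} {w : ℂ} :
    w ∈ principalSublattice y ↔ ∃ a, y ∣ a ∧ (a : ℂ) = w := by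
  simp [principalSublattice, Ideal.mem_span_singleton]

theorem principalSublattice_le_Zi (y : ℤ[i]) : principalSublattice y ≤ Zi :=
  AddSubgroup.map_le_range _ _

theorem relIndex_principalSublattice_ne_zero {y : ℤ[i]} (hy : y ≠ 0) :
    (principalSublattice y).relIndex Zi ≠ 0 := by
  have : Finite (ℤ[i] ⧸ (Ideal.span {y}).toAddSubgroup) :=
    Ideal.finiteQuotientOfFreeOfNeBot _ (by simpa using hy)
  rw [principalSublattice, Zi, AddMonoidHom.range_eq_map,
    AddSubgroup.relIndex_map_map_of_injective _ _ toComplex_injective,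
    AddSubgroup.relIndex_top_right]
  exact AddSubgroup.index_ne_zero_of_finite

theorem conj_toComplex_ne_zero {z : ℤ[i]} (hz : z ≠ 0) : conj (z : ℂ) ≠ 0 := by
  rwa [← toComplex_star, Ne, toComplex_eq_zero, star_eq_zero]

theorem div_add_eq_mul_div_add_iff {p q z ε a b : ℤ[i]} (hq : q ≠ 0) (hz : z ≠ 0) :
    (p : ℂ) / q + a = ε * (z / conj (z : ℂ)) * ((p : ℂ) / q + b) ↔
      star z * (p + q * a) = ε * z * (p + q * b) := by
  have hqc : (q : ℂ) ≠ 0 := by rwa [Ne, toComplex_eq_zero]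
  have hzc := conj_toComplex_ne_zero hz
  rw [← toComplex_inj]
  simp only [map_mul, map_add, toComplex_star]
  field_simp

theorem norm_unit_mul_div_conj {z ε : ℤ[i]} (hε : IsUnit ε) (hz : z ≠ 0) :
    ‖(ε : ℂ) * (z / conj (z : ℂ))‖ = 1 := by
  have hε1 : ‖(ε : ℂ)‖ ^ 2 = 1 := by
    rw [← Complex.normSq_eq_norm_sq, ← intCast_real_norm,
      (Zsqrtd.norm_eq_one_iff' (by norm_num) ε).2 hε, Int.cast_one]
  rw [norm_mul, norm_div, Complex.norm_conj, div_self (by simpa using hz), mul_one]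
  nlinarith [norm_nonneg (ε : ℂ)]

theorem isLinIso_mul {u : ℂ} (hu : ‖u‖ = 1) : IsLinIso (fun w => u * w) :=
  ⟨rotation ⟨u, by simpa [Submonoid.unitSphere] using hu⟩, rfl⟩

theorem mem_shiftedZi {x w : ℂ} : w ∈ shiftedZi x ↔ ∃ a : ℤ[i], w = x + a := by
  simp [shiftedZi, Set.mem_vadd_set, Zi, eq_comm]

theorem mem_shiftedZi_inter_image_mul {x u w : ℂ} :
    w ∈ shiftedZi x ∩ (fun v => u * v) '' shiftedZi x ↔
      ∃ a b : ℤ[i], w = x + a ∧ x + a = u * (x + b) := by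
  simp only [Set.mem_inter_iff, Set.mem_image, mem_shiftedZi]
  constructor
  · rintro ⟨⟨a, rfl⟩, _, ⟨b, rfl⟩, hb⟩
    exact ⟨a, b, rfl, hb.symm⟩
  · rintro ⟨a, b, rfl, hab⟩
    exact ⟨⟨a, rfl⟩, _, ⟨b, rfl⟩, hab.symm⟩

theorem shiftedZi_inter_image_mul_eq {p q z ε k A B : ℤ[i]} (hq : q ≠ 0) (hz : z ≠ 0)
    (hk : q * k = ε * z - star z) (hAB : A * (ε * z) + B * star z = 1) :
    shiftedZi ((p : ℂ) / q) ∩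
        (fun v => (ε : ℂ) * (z / conj (z : ℂ)) * v) '' shiftedZi ((p : ℂ) / q) =
      ((p : ℂ) / q + ↑(B * (p * k))) +ᵥ (principalSublattice (ε * z) : Set ℂ) := by
  ext w
  rw [mem_shiftedZi_inter_image_mul, Set.mem_vadd_set_iff_neg_vadd_mem, SetLike.mem_coe,
    mem_principalSublattice]
  simp only [div_add_eq_mul_div_add_iff hq hz, mul_add_eq_mul_add_iff hq hk, exists_and_left,
    exists_mul_sub_mul_eq_iff_dvd_sub hAB, vadd_eq_add]
  constructor
  · rintro ⟨a, rfl, hdvd⟩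
    exact ⟨_, hdvd, by rw [map_sub]; ring⟩
  · rintro ⟨t, hdvd, ht⟩
    refine ⟨t + B * (p * k), ?_, by simpa using hdvd⟩
    simp only [map_add, map_mul] at ht ⊢
    linear_combination -ht

theorem mem_SOCs_div_iff {p q z ε : ℤ[i]} (hq : q ≠ 0) (hpq : IsCoprime p q)
    (hcop : IsCoprime z (star z)) (hε : IsUnit ε) :
    (fun w => (ε : ℂ) * ((z : ℂ) / conj (z : ℂ)) * w) ∈ SOCs ((p : ℂ) / (q : ℂ)) ↔
      q ∣ ε * z - star z := by
  have hz : z ≠ 0 := by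
    rintro rfl
    exact not_isCoprime_zero_zero (by simpa using hcop)
  constructor
  · rintro ⟨⟨-, c, -, Λ, -, -, hS⟩, -⟩
    have hc : c ∈ c +ᵥ (Λ : Set ℂ) := ⟨0, Λ.zero_mem, add_zero c⟩
    obtain ⟨a, b, -, hab⟩ := mem_shiftedZi_inter_image_mul.1 (hS ▸ hc)
    exact dvd_sub_of_mul_add_eq_mul_add hpq ((div_add_eq_mul_div_add_iff hq hz).1 hab)
  · rintro ⟨k, hk⟩
    obtain ⟨A, B, hAB⟩ := (isCoprime_mul_unit_left_left hε z (star z)).2 hcop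
    have hu := norm_unit_mul_div_conj hε hz
    exact ⟨⟨isLinIso_mul hu, _, mem_shiftedZi.2 ⟨_, rfl⟩, principalSublattice (ε * z),
      principalSublattice_le_Zi _,
      relIndex_principalSublattice_ne_zero (mul_ne_zero hε.ne_zero hz),
      shiftedZi_inter_image_mul_eq hq hz hk.symm hAB⟩, _, hu, fun _ => rfl⟩

theorem exists_div_eq_unit_mul_div_conj {a b : ℤ[i]} (hb : b ≠ 0) (hab : a.norm = b.norm) :
    ∃ z ε : ℤ[i], IsCoprime z (star z) ∧ IsUnit ε ∧ (a : ℂ) / b = ε * (z / conj (z : ℂ)) := by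
  obtain ⟨a', b', c, hrel, rfl, rfl⟩ := UniqueFactorizationMonoid.exists_reduced_factors' a b hb
  have hcop : IsCoprime a' b' := isRelPrime_iff_isCoprime.1 hrel
  have hc : c ≠ 0 := left_ne_zero_of_mul hb
  have hnorm : a' * star a' = b' * star b' := by
    rw [Zsqrtd.norm_mul, Zsqrtd.norm_mul] at hab
    rw [← Zsqrtd.norm_eq_mul_conj, ← Zsqrtd.norm_eq_mul_conj,
      mul_left_cancel₀ (by simpa using hc) hab]
  have hb'_dvd : b' ∣ star a' := hcop.symm.dvd_of_dvd_mul_left ⟨star b', hnorm⟩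
  have h_dvd_b' : star a' ∣ b' :=
    (hcop.map (starRingEnd ℤ[i])).dvd_of_dvd_mul_right
      ⟨a', by rw [starRingEnd_apply, starRingEnd_apply, ← hnorm, mul_comm]⟩
  obtain ⟨v, rfl⟩ := associated_of_dvd_dvd h_dvd_b' hb'_dvd
  refine ⟨a', ↑v⁻¹, (isCoprime_mul_unit_right_right v.isUnit a' (star a')).1 hcop,
    Units.isUnit _, ?_⟩
  have hv : (v : ℂ) * ↑(v⁻¹ : ℤ[i]ˣ) = 1 := by
    rw [← map_mul, Units.mul_inv, map_one]
  have hcc : (c : ℂ) ≠ 0 := by rwa [Ne, toComplex_eq_zero]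
  have ha' : conj (a' : ℂ) ≠ 0 := conj_toComplex_ne_zero (by rintro rfl; simp at hb)
  have hvc : (v : ℂ) ≠ 0 := left_ne_zero_of_mul_eq_one hv
  simp only [map_mul, toComplex_star]
  field_simp
  linear_combination -(a' : ℂ) * hv

theorem exists_mul_eq_of_mul_mem_OCs {x u : ℂ} (hu : (fun w => u * w) ∈ OCs x) :
    ∃ a b : ℤ[i], b ≠ 0 ∧ u * b = a := by
  obtain ⟨-, c, -, Λ, hΛ, hind, hS⟩ := hu
  have : Infinite Zi := by
    rw [Zi, ← SetLike.coe_sort_coe, AddMonoidHom.coe_range]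
    exact (Set.infinite_range_of_injective toComplex_injective).to_subtype
  have hΛ_ne_bot : Λ ≠ ⊥ := by
    rintro rfl
    exact hind (by rw [AddSubgroup.relIndex_bot_left, Nat.card_eq_zero_of_infinite])
  obtain ⟨⟨l, hl⟩, hl0⟩ := AddSubgroup.ne_bot_iff_exists_ne_zero.1 hΛ_ne_bot
  have hmem : ∀ l ∈ Λ, c + l ∈ shiftedZi x ∩ (fun w => u * w) '' shiftedZi x := by
    rw [hS]
    exact fun l hl => ⟨l, hl, rfl⟩
  obtain ⟨a₁, b₁, h₁', h₁⟩ := mem_shiftedZi_inter_image_mul.1 (hmem 0 Λ.zero_mem)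
  obtain ⟨a₂, b₂, h₂', h₂⟩ := mem_shiftedZi_inter_image_mul.1 (hmem l hl)
  obtain ⟨l', hl'⟩ := hΛ hl
  have hdiff : u * ((b₂ : ℂ) - b₁) = l' := by
    rw [show (l' : ℂ) = l from hl']
    linear_combination h₁ - h₂ + h₁' - h₂'
  refine ⟨l', b₂ - b₁, fun h => hl0 ?_, by rw [map_sub, hdiff]⟩
  rw [sub_eq_zero.1 h, sub_self, mul_zero, eq_comm, toComplex_eq_zero] at hdiff
  simp [← hl', hdiff]

theorem exists_eq_unit_mul_div_conj_of_mem_SOCs {x : ℂ} {f : ℂ → ℂ} (hf : f ∈ SOCs x) :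
    ∃ z ε : ℤ[i], IsCoprime z (star z) ∧ IsUnit ε ∧
      f = fun w => (ε : ℂ) * ((z : ℂ) / conj (z : ℂ)) * w := by
  obtain ⟨hOC, u, hu, hfu⟩ := hf
  obtain rfl : f = fun w => u * w := funext hfu
  obtain ⟨a, b, hb, hab⟩ := exists_mul_eq_of_mul_mem_OCs hOC
  have hnorm : a.norm = b.norm := by
    have hab' : ‖(a : ℂ)‖ = ‖(b : ℂ)‖ := by rw [← hab, norm_mul, hu, one_mul]
    have : (a.norm : ℝ) = b.norm := by
      rw [intCast_real_norm, intCast_real_norm, Complex.normSq_eq_norm_sq,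
        Complex.normSq_eq_norm_sq, hab']
    exact_mod_cast this
  obtain ⟨z, ε, hz, hε, h⟩ := exists_div_eq_unit_mul_div_conj hb hnorm
  refine ⟨z, ε, hz, hε, ?_⟩
  rw [← h, ← hab, mul_div_cancel_right₀ _ (by rwa [Ne, toComplex_eq_zero])]

theorem SOCs_div_subset {p p' q : ℤ[i]} (hq : q ≠ 0) (hpq : IsCoprime p q)
    (hp'q : IsCoprime p' q) : SOCs ((p : ℂ) / q) ⊆ SOCs ((p' : ℂ) / q) := by
  intro f hf
  obtain ⟨z, ε, hz, hε, rfl⟩ := exists_eq_unit_mul_div_conj_of_mem_SOCs hf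
  exact (mem_SOCs_div_iff hq hp'q hz hε).2 ((mem_SOCs_div_iff hq hpq hz hε).1 hf)

theorem SOC_rational_shift (p q : GaussianInt) (hq : q ≠ 0) (hpq : IsCoprime p q)
    (z : GaussianInt) (hcop : IsCoprime z (star z))
    (ε : GaussianInt) (hε : ε ∈ ({1, -1, ⟨0, 1⟩, ⟨0, -1⟩} : Set GaussianInt)) :
    ((fun w => (ε : ℂ) * ((z : ℂ) / conj (z : ℂ)) * w) ∈ SOCs ((p : ℂ) / (q : ℂ)) ↔
        q ∣ ε * z - star z) ∧
      SOCs ((p : ℂ) / (q : ℂ)) = SOCs (1 / (q : ℂ)) := by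
  have hunit : IsUnit ε := by
    rcases hε with rfl | rfl | rfl | rfl
    · exact isUnit_one
    · exact isUnit_one.neg
    · exact .of_mul_eq_one (⟨0, -1⟩ : ℤ[i]) (by decide)
    · exact .of_mul_eq_one (⟨0, 1⟩ : ℤ[i]) (by decide)
  refine ⟨mem_SOCs_div_iff hq hpq hcop hunit, ?_⟩
  rw [← toComplex_one]
  exact (SOCs_div_subset hq hpq isCoprime_one_left).antisymm
    (SOCs_div_subset hq isCoprime_one_left hpq)
end

section
/- Let x ∈ ℂ and let Q be a surjective real-linear isometry of ℂ with Q(ℤ[i]) = ℤ[i] (i.e., Q belongs to the point group of Γ). Then OC(Qx + Γ) = Q ∘ OC(x+Γ) ∘ Q⁻¹; that is, a surjective real-linear isometry R of ℂ belongs to OC(Qx + Γ) if and only if Q⁻¹ ∘ R ∘ Q belongs to OC(x+Γ). -/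
open Pointwise Complex ComplexConjugate

/-!
Transporting everything by `Q` works because `Q` is additive and preserves `Γ`: it maps
`y + Γ` onto `Q y + Γ`, turns `(y+Γ) ∩ f(y+Γ) = c + Λ` into
`(Q y+Γ) ∩ (Q f Q⁻¹)(Q y+Γ) = Q c + Q Λ`, and, being injective, keeps `[Γ : Q Λ] = [Γ : Λ]`.
Applying the same to `Q⁻¹` gives the converse inclusion.
-/

section PointGroup

variable (Q : ℂ ≃ₗᵢ[ℝ] ℂ)

lemma image_shiftedZi (hQ : ⇑Q '' (Zi : Set ℂ) = Zi) (y : ℂ) :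
    ⇑Q '' shiftedZi y = shiftedZi (Q y) := by
  rw [shiftedZi, shiftedZi, Set.image_vadd_distrib, hQ]

lemma image_symm_Zi (hQ : ⇑Q '' (Zi : Set ℂ) = Zi) : ⇑Q.symm '' (Zi : Set ℂ) = Zi := by
  simpa [Set.image_image] using congrArg (⇑Q.symm '' ·) hQ.symm

lemma map_Zi (hQ : ⇑Q '' (Zi : Set ℂ) = Zi) : Zi.map (Q : ℂ →+ ℂ) = Zi :=
  SetLike.coe_injective (by rw [AddSubgroup.coe_map]; exact hQ)

lemma IsLinIso.conj {f : ℂ → ℂ} (hf : IsLinIso f) : IsLinIso (⇑Q ∘ f ∘ ⇑Q.symm) := by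
  obtain ⟨R, rfl⟩ := hf
  exact ⟨(Q.symm.trans R).trans Q, rfl⟩

lemma conj_mem_OCs (hQ : ⇑Q '' (Zi : Set ℂ) = Zi) {y : ℂ} {f : ℂ → ℂ} (hf : f ∈ OCs y) :
    ⇑Q ∘ f ∘ ⇑Q.symm ∈ OCs (Q y) := by
  obtain ⟨hf, c, hc, Λ, hΛ, hidx, hcoset⟩ := hf
  have hQinj : Function.Injective (Q : ℂ →+ ℂ) := Q.injective
  refine ⟨hf.conj Q, Q c, image_shiftedZi Q hQ y ▸ Set.mem_image_of_mem Q hc,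
    Λ.map (Q : ℂ →+ ℂ), map_Zi Q hQ ▸ AddSubgroup.map_mono hΛ, ?_, ?_⟩
  · rwa [← map_Zi Q hQ, AddSubgroup.relIndex_map_map_of_injective _ _ hQinj]
  · have hpull : ⇑Q.symm '' shiftedZi (Q y) = shiftedZi y := by
      rw [image_shiftedZi Q.symm (image_symm_Zi Q hQ), Q.symm_apply_apply]
    rw [Set.image_comp, Set.image_comp, hpull, ← image_shiftedZi Q hQ,
      ← Set.image_inter Q.injective, hcoset, Set.image_vadd_distrib, AddSubgroup.coe_map]
    rfl

lemma mem_OCs_apply_iff (hQ : ⇑Q '' (Zi : Set ℂ) = Zi) {y : ℂ} {f : ℂ → ℂ} :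
    f ∈ OCs (Q y) ↔ ⇑Q.symm ∘ f ∘ ⇑Q ∈ OCs y := by
  constructor
  · intro hf
    simpa using conj_mem_OCs Q.symm (image_symm_Zi Q hQ) hf
  · intro hf
    have h := conj_mem_OCs Q hQ hf
    have hcancel : ⇑Q ∘ (⇑Q.symm ∘ f ∘ ⇑Q) ∘ ⇑Q.symm = f := by
      funext w
      simp
    rwa [hcancel] at h

end PointGroup

theorem OC_point_group_conjugation (x : ℂ) (Q : ℂ ≃ₗᵢ[ℝ] ℂ)
    (hQ : ⇑Q '' (Zi : Set ℂ) = (Zi : Set ℂ)) :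
    OCs (Q x) = (fun f => ⇑Q ∘ f ∘ ⇑Q.symm) '' OCs x ∧
      ∀ R : ℂ ≃ₗᵢ[ℝ] ℂ, ⇑R ∈ OCs (Q x) ↔ (⇑Q.symm ∘ ⇑R ∘ ⇑Q) ∈ OCs x := by
  refine ⟨?_, fun R => mem_OCs_apply_iff Q hQ⟩
  ext f
  constructor
  · intro hf
    refine ⟨⇑Q.symm ∘ f ∘ ⇑Q, (mem_OCs_apply_iff Q hQ).mp hf, ?_⟩
    funext w
    simp
  · rintro ⟨g, hg, rfl⟩
    exact conj_mem_OCs Q hQ hg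
end
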